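/- arXiv:2205.15560 — 6 statements merged into one kernel-verified Lean document; each statement's English description precedes it below -/
import Mathlib

section
/- If R_c > 1 and (S*, E*, I*, A*, Q*, R*) is the unique equilibrium of the model with all coordinates strictly positive, then S* + E* + I* + A* + Q* + R* = S⁰ and R_c = S⁰/S*. -/
/-!
Summing the six equilibrium equations, every transfer term cancels and only `λ - d N = 0`
survives, so `N = λ / d = S⁰`. The last two equations give `I = p c E / B₁` and
`A = (1 - p) c E / B₂`; substituting these into the equation for `E` turns
`β S (a E + I + b A) = (c + d) E N` into `(c + d) E · R_c S = (c + d) E N`, and cancelling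
`(c + d) E ≠ 0` gives `R_c S = N = S⁰`.
-/

/-- `(S, E, I, A, Q, R)` is an equilibrium of the COVID-19 model with quarantine and
standard incidence rate: the total population is positive and all six right-hand
sides vanish. -/
def IsEquilibrium (lam β a b c d q1 q2 r1 r2 r3 p S E I A Q R : ℝ) : Prop :=
  0 < S + E + I + A + Q + R ∧
  lam - β * S * (a * E + I + b * A) / (S + E + I + A + Q + R) - d * S = 0 ∧
  β * S * (a * E + I + b * A) / (S + E + I + A + Q + R) - (c + d) * E = 0 ∧
  p * c * E - (q1 + r1 + d) * I = 0 ∧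
  (1 - p) * c * E - (q2 + r2 + d) * A = 0 ∧
  q1 * I + q2 * A - (r3 + d) * Q = 0 ∧
  r1 * I + r2 * A + r3 * Q - d * R = 0

/-- An equilibrium all of whose six coordinates are strictly positive. -/
def IsPositiveEquilibrium (lam β a b c d q1 q2 r1 r2 r3 p S E I A Q R : ℝ) : Prop :=
  IsEquilibrium lam β a b c d q1 q2 r1 r2 r3 p S E I A Q R ∧
  0 < S ∧ 0 < E ∧ 0 < I ∧ 0 < A ∧ 0 < Q ∧ 0 < R

noncomputable def controlReproductionNumber (β a b c d q1 q2 r1 r2 p : ℝ) : ℝ :=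
  a * β / (c + d) + p * c * β / ((c + d) * (q1 + r1 + d))
    + b * β * c * (1 - p) / ((c + d) * (q2 + r2 + d))

namespace IsEquilibrium

variable {lam β a b c d q1 q2 r1 r2 r3 p S E I A Q R : ℝ}

theorem mul_total_eq (h : IsEquilibrium lam β a b c d q1 q2 r1 r2 r3 p S E I A Q R) :
    d * (S + E + I + A + Q + R) = lam := by
  obtain ⟨-, hS, hE, hI, hA, hQ, hR⟩ := h
  linear_combination -(hS + hE + hI + hA + hQ + hR)

theorem incidence_eq (h : IsEquilibrium lam β a b c d q1 q2 r1 r2 r3 p S E I A Q R) :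
    β * S * (a * E + I + b * A) = (c + d) * E * (S + E + I + A + Q + R) := by
  obtain ⟨hN, -, hE, -⟩ := h
  rw [sub_eq_zero, div_eq_iff hN.ne'] at hE
  exact hE

theorem controlReproductionNumber_mul_eq_total
    (h : IsEquilibrium lam β a b c d q1 q2 r1 r2 r3 p S E I A Q R)
    (hcd : c + d ≠ 0) (hB1 : q1 + r1 + d ≠ 0) (hB2 : q2 + r2 + d ≠ 0) (hE : E ≠ 0) :
    controlReproductionNumber β a b c d q1 q2 r1 r2 p * S = S + E + I + A + Q + R := by
  have hinc := h.incidence_eq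
  obtain ⟨-, -, -, hI, hA, -⟩ := h
  have hI' : I = p * c * E / (q1 + r1 + d) := by
    rw [eq_div_iff hB1]; linear_combination -hI
  have hA' : A = (1 - p) * c * E / (q2 + r2 + d) := by
    rw [eq_div_iff hB2]; linear_combination -hA
  have hforce : (c + d) * E * controlReproductionNumber β a b c d q1 q2 r1 r2 p
      = β * (a * E + I + b * A) := by
    rw [hI', hA', controlReproductionNumber]
    field_simp
  refine mul_left_cancel₀ (mul_ne_zero hcd hE) ?_
  linear_combination S * hforce + hinc

end IsEquilibrium

theorem equilibrium_total_population_and_Rc_general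
    (lam β a b c d q1 q2 r1 r2 r3 p B1 B2 Rc S0 Sstar Estar Istar Astar Qstar Rstar : ℝ)
    (hc : 0 < c)
    (hd : 0 < d) (hq1 : 0 < q1) (hq2 : 0 < q2) (hr1 : 0 < r1) (hr2 : 0 < r2)
    (hB1 : B1 = q1 + r1 + d) (hB2 : B2 = q2 + r2 + d)
    (hRc : Rc = a * β / (c + d) + p * c * β / ((c + d) * B1)
      + b * β * c * (1 - p) / ((c + d) * B2))
    (hS0 : S0 = lam / d)
    (hstar : IsPositiveEquilibrium lam β a b c d q1 q2 r1 r2 r3 p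
      Sstar Estar Istar Astar Qstar Rstar) :
    Sstar + Estar + Istar + Astar + Qstar + Rstar = S0 ∧ Rc = S0 / Sstar := by
  obtain ⟨heq, hS, hE, -⟩ := hstar
  subst hB1 hB2 hS0
  have htotal : Sstar + Estar + Istar + Astar + Qstar + Rstar = lam / d := by
    rw [eq_div_iff hd.ne', mul_comm]
    exact heq.mul_total_eq
  refine ⟨htotal, ?_⟩
  rw [← htotal, eq_div_iff hS.ne', hRc]
  exact heq.controlReproductionNumber_mul_eq_total (by positivity) (by positivity)
    (by positivity) hE.ne'

theorem equilibrium_total_population_and_Rc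
    (lam β a b c d q1 q2 r1 r2 r3 p B1 B2 Rc S0 Sstar Estar Istar Astar Qstar Rstar : ℝ)
    (hlam : 0 < lam) (hβ : 0 < β) (ha : 0 < a) (hb : 0 < b) (hc : 0 < c)
    (hd : 0 < d) (hq1 : 0 < q1) (hq2 : 0 < q2) (hr1 : 0 < r1) (hr2 : 0 < r2)
    (hr3 : 0 < r3) (hp : 0 < p) (hp1 : p < 1)
    (hB1 : B1 = q1 + r1 + d) (hB2 : B2 = q2 + r2 + d)
    (hRc : Rc = a * β / (c + d) + p * c * β / ((c + d) * B1)
      + b * β * c * (1 - p) / ((c + d) * B2))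
    (hS0 : S0 = lam / d)
    (hRc1 : 1 < Rc)
    (hstar : IsPositiveEquilibrium lam β a b c d q1 q2 r1 r2 r3 p
      Sstar Estar Istar Astar Qstar Rstar) :
    Sstar + Estar + Istar + Astar + Qstar + Rstar = S0 ∧ Rc = S0 / Sstar :=
  equilibrium_total_population_and_Rc_general lam β a b c d q1 q2 r1 r2 r3 p B1 B2 Rc S0 Sstar Estar
    Istar Astar Qstar Rstar hc hd hq1 hq2 hr1 hr2 hB1 hB2 hRc hS0 hstar
end

section
/- If R_c < 1, then every complex root of the characteristic polynomial F(Λ) = (Λ + d)²(Λ + r₃ + d)(Λ³ + b₁Λ² + b₂Λ + b₃) has strictly negative real part, where b₁ = B₁ + B₂ + (c + d)[1 − R_c + pcβ/((c + d)B₁) + bcβ(1 − p)/((c + d)B₂)], b₂ = (B₁ + B₂)(c + d)(1 − R_c) + B₂pcβ/B₁ + B₁bcβ(1 − p)/B₂ + B₁B₂, and b₃ = B₁B₂(c + d)(1 − R_c). -/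
lemma cubic_neg_re (b1 b2 b3 : ℝ) (h1 : 0 < b1) (h2 : 0 < b2) (h3 : 0 < b3)
    (hRH : b3 < b1 * b2) (z : ℂ)
    (hz : z ^ 3 + (b1:ℂ) * z ^ 2 + (b2:ℂ) * z + (b3:ℂ) = 0) : z.re < 0 := by
  by_contra hx
  push_neg at hx
  have hre := congrArg Complex.re hz
  have him := congrArg Complex.im hz
  simp [pow_succ, Complex.add_re, Complex.add_im, Complex.mul_re, Complex.mul_im] at hre him
  rcases eq_or_ne z.im 0 with hy | hy
  · rw [hy] at hre
    nlinarith [hre, mul_nonneg (mul_nonneg hx hx) hx, mul_nonneg hx hx,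
      mul_nonneg h1.le (mul_nonneg hx hx), mul_nonneg h2.le hx]
  · have hq : z.im ^ 2 = 3 * z.re ^ 2 + 2 * b1 * z.re + b2 := by
      rcases mul_eq_zero.mp (show z.im * (3 * z.re ^ 2 + 2 * b1 * z.re + b2 - z.im ^ 2) = 0
        by linear_combination him) with h | h
      · exact absurd h hy
      · linarith
    nlinarith [hre, hq, mul_nonneg (mul_nonneg hx hx) hx, mul_nonneg hx hx,
      mul_nonneg h1.le (mul_nonneg hx hx), mul_nonneg h2.le hx,
      mul_nonneg (mul_nonneg h1.le h1.le) hx]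

lemma RH_aux (B1 B2 u m P Q : ℝ) (hB1 : 0 < B1) (hB2 : 0 < B2) (hu : 0 < u)
    (hm : 0 < m) (hP : 0 < P) (hQ : 0 < Q) :
    B1 * B2 * m < (B1 + B2 + u) * ((B1 + B2) * m + P + Q + B1 * B2) := by
  nlinarith [mul_pos hB1 hB2, mul_pos (mul_pos hB1 hB1) hm, mul_pos (mul_pos hB2 hB2) hm,
    mul_pos (mul_pos hB1 hB2) hm, mul_pos (mul_pos hB1 hB2) hu,
    mul_pos hB1 hP, mul_pos hB2 hP, mul_pos hB1 hQ, mul_pos hB2 hQ,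
    mul_pos hu hP, mul_pos hu hQ]

theorem char_roots_neg_re_of_Rc_lt_one
    (lam β a b c d q1 q2 r1 r2 r3 p B1 B2 Rc b1 b2 b3 : ℝ)
    (hlam : 0 < lam) (hβ : 0 < β) (ha : 0 < a) (hb : 0 < b) (hc : 0 < c)
    (hd : 0 < d) (hq1 : 0 < q1) (hq2 : 0 < q2) (hr1 : 0 < r1) (hr2 : 0 < r2)
    (hr3 : 0 < r3) (hp : 0 < p) (hp1 : p < 1)
    (hB1 : B1 = q1 + r1 + d) (hB2 : B2 = q2 + r2 + d)
    (hRc : Rc = a * β / (c + d) + p * c * β / ((c + d) * B1)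
      + b * β * c * (1 - p) / ((c + d) * B2))
    (hb1 : b1 = B1 + B2 + (c + d) * (1 - Rc + p * c * β / ((c + d) * B1)
      + b * c * β * (1 - p) / ((c + d) * B2)))
    (hb2 : b2 = (B1 + B2) * (c + d) * (1 - Rc) + B2 * p * c * β / B1
      + B1 * b * c * β * (1 - p) / B2 + B1 * B2)
    (hb3 : b3 = B1 * B2 * (c + d) * (1 - Rc))
    (hRc1 : Rc < 1) :
    ∀ Λ : ℂ,
      (Λ + (d : ℂ)) ^ 2 * (Λ + (r3 : ℂ) + (d : ℂ)) *
        (Λ ^ 3 + (b1 : ℂ) * Λ ^ 2 + (b2 : ℂ) * Λ + (b3 : ℂ)) = 0 →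
      Λ.re < 0 := by
  have hB1p : 0 < B1 := by rw [hB1]; positivity
  have hB2p : 0 < B2 := by rw [hB2]; positivity
  have hK : (0:ℝ) < c + d := by linarith
  have hX : 0 < p * c * β / ((c + d) * B1) := by positivity
  have hY : 0 < b * β * c * (1 - p) / ((c + d) * B2) := by
    have : 0 < 1 - p := by linarith
    positivity
  have h1Rc : 0 < 1 - Rc := by linarith
  -- b1 simplifies
  have hb1' : b1 = B1 + B2 + ((c + d) - a * β) := by
    rw [hb1, hRc]
    field_simp
    ring
  have haβ : a * β < c + d := by
    have h : a * β / (c + d) < 1 := by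
      rw [hRc] at hRc1; linarith
    calc a * β = a * β / (c + d) * (c + d) := by field_simp
      _ < 1 * (c + d) := by apply mul_lt_mul_of_pos_right h hK
      _ = c + d := by ring
  have hb1pos : 0 < b1 := by rw [hb1']; linarith
  have hP : 0 < B2 * p * c * β / B1 := by positivity
  have hQ : 0 < B1 * b * c * β * (1 - p) / B2 := by
    have : 0 < 1 - p := by linarith
    positivity
  have hT1 : 0 < (B1 + B2) * (c + d) * (1 - Rc) :=
    mul_pos (mul_pos (by linarith) hK) h1Rc
  have hb2pos : 0 < b2 := by rw [hb2]; nlinarith [mul_pos hB1p hB2p]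
  have hb3pos : 0 < b3 := by
    rw [hb3]; exact mul_pos (mul_pos (mul_pos hB1p hB2p) hK) h1Rc
  have hRH : b3 < b1 * b2 := by
    have key := RH_aux B1 B2 ((c + d) - a * β) ((c + d) * (1 - Rc))
      (B2 * p * c * β / B1) (B1 * b * c * β * (1 - p) / B2)
      hB1p hB2p (by linarith) (mul_pos hK h1Rc) hP hQ
    calc b3 = B1 * B2 * ((c + d) * (1 - Rc)) := by rw [hb3]; ring
      _ < _ := key
      _ = b1 * b2 := by rw [hb1', hb2]; ring
  intro Λ hΛ
  rcases mul_eq_zero.mp hΛ with h | h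
  · rcases mul_eq_zero.mp h with h | h
    · have hΛd : Λ = -(d:ℂ) := by
        have := pow_eq_zero_iff (n := 2) (by norm_num) |>.mp h
        linear_combination this
      rw [hΛd]
      simpa using hd
    · have hΛd : Λ = -((r3:ℂ) + (d:ℂ)) := by linear_combination h
      rw [hΛd]
      simp [Complex.add_re]
      linarith
  · exact cubic_neg_re b1 b2 b3 hb1pos hb2pos hb3pos hRH Λ h
end

section
/- If R_c > 1, then there exists a real number Λ* > 0 such that Λ*³ + b₁Λ*² + b₂Λ* + b₃ = 0, where b₁ = B₁ + B₂ + (c + d)[1 − R_c + pcβ/((c + d)B₁) + bcβ(1 − p)/((c + d)B₂)], b₂ = (B₁ + B₂)(c + d)(1 − R_c) + B₂pcβ/B₁ + B₁bcβ(1 − p)/B₂ + B₁B₂, and b₃ = B₁B₂(c + d)(1 − R_c); in particular the disease-free equilibrium is linearly unstable. -/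
theorem exists_positive_root_of_Rc_gt_one
    (lam β a b c d q1 q2 r1 r2 r3 p B1 B2 Rc b1 b2 b3 : ℝ)
    (hlam : 0 < lam) (hβ : 0 < β) (ha : 0 < a) (hb : 0 < b) (hc : 0 < c)
    (hd : 0 < d) (hq1 : 0 < q1) (hq2 : 0 < q2) (hr1 : 0 < r1) (hr2 : 0 < r2)
    (hr3 : 0 < r3) (hp : 0 < p) (hp1 : p < 1)
    (hB1 : B1 = q1 + r1 + d) (hB2 : B2 = q2 + r2 + d)
    (hRc : Rc = a * β / (c + d) + p * c * β / ((c + d) * B1)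
      + b * β * c * (1 - p) / ((c + d) * B2))
    (hb1 : b1 = B1 + B2 + (c + d) * (1 - Rc + p * c * β / ((c + d) * B1)
      + b * c * β * (1 - p) / ((c + d) * B2)))
    (hb2 : b2 = (B1 + B2) * (c + d) * (1 - Rc) + B2 * p * c * β / B1
      + B1 * b * c * β * (1 - p) / B2 + B1 * B2)
    (hb3 : b3 = B1 * B2 * (c + d) * (1 - Rc))
    (hRc1 : 1 < Rc) :
    ∃ Λ : ℝ, 0 < Λ ∧ Λ ^ 3 + b1 * Λ ^ 2 + b2 * Λ + b3 = 0 := by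
  have hB1pos : 0 < B1 := by rw [hB1]; linarith
  have hB2pos : 0 < B2 := by rw [hB2]; linarith
  have hb3neg : b3 < 0 := by
    rw [hb3]
    have h1 : 0 < B1 * B2 * (c + d) := by positivity
    nlinarith
  set f : ℝ → ℝ := fun x => x ^ 3 + b1 * x ^ 2 + b2 * x + b3 with hf
  have hcont : Continuous f := by fun_prop
  set M : ℝ := 1 + |b1| + |b2| + |b3| with hM
  have h1 := abs_nonneg b1
  have h2 := abs_nonneg b2
  have h3 := abs_nonneg b3
  have hM1 : 1 ≤ M := by simp only [hM]; linarith
  have hMpos : 0 < M := by linarith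
  have e1 : -|b1| ≤ b1 := neg_abs_le b1
  have e2 : -|b2| ≤ b2 := neg_abs_le b2
  have e3 : -|b3| ≤ b3 := neg_abs_le b3
  have hfM : 0 < f M := by
    show 0 < M ^ 3 + b1 * M ^ 2 + b2 * M + b3
    have hsq : M ≤ M ^ 2 := by nlinarith
    have hsq1 : (1:ℝ) ≤ M ^ 2 := le_trans hM1 hsq
    have hsqpos : 0 < M ^ 2 := by positivity
    have t1 : -|b1| * M ^ 2 ≤ b1 * M ^ 2 :=
      mul_le_mul_of_nonneg_right e1 (sq_nonneg M)
    have t2 : -|b2| * M ^ 2 ≤ b2 * M := by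
      have u1 : |b2| * M ≤ |b2| * M ^ 2 := mul_le_mul_of_nonneg_left hsq h2
      have u2 : -|b2| * M ≤ b2 * M := mul_le_mul_of_nonneg_right e2 (le_of_lt hMpos)
      linarith
    have t3 : -|b3| * M ^ 2 ≤ b3 := by
      have u1 : |b3| * 1 ≤ |b3| * M ^ 2 := mul_le_mul_of_nonneg_left hsq1 h3
      linarith
    have hsum : |b1| * M ^ 2 + |b2| * M ^ 2 + |b3| * M ^ 2 = M ^ 3 - M ^ 2 := by
      have h : |b1| + |b2| + |b3| = M - 1 := by rw [hM]; ring
      calc |b1| * M ^ 2 + |b2| * M ^ 2 + |b3| * M ^ 2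
          = (|b1| + |b2| + |b3|) * M ^ 2 := by ring
        _ = (M - 1) * M ^ 2 := by rw [h]
        _ = M ^ 3 - M ^ 2 := by ring
    linarith
  have hf0 : f 0 < 0 := by
    show (0:ℝ) ^ 3 + b1 * 0 ^ 2 + b2 * 0 + b3 < 0
    simpa using hb3neg
  have hsub := intermediate_value_Icc (le_of_lt hMpos) hcont.continuousOn
  have h0mem : (0:ℝ) ∈ Set.Icc (f 0) (f M) := ⟨le_of_lt hf0, le_of_lt hfM⟩
  obtain ⟨x, hx, hfx⟩ := hsub h0mem
  refine ⟨x, ?_, hfx⟩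
  rcases lt_or_eq_of_le hx.1 with h | h
  · exact h
  · exfalso; rw [← h] at hfx; rw [hfx] at hf0; exact lt_irrefl 0 hf0
end

section
/- If R_c = 1, then every complex root of the characteristic polynomial F(Λ) = (Λ + d)²(Λ + r₃ + d)(Λ³ + b₁Λ² + b₂Λ + b₃) has nonpositive real part, and Λ = 0 is a simple root of F, where b₁ = B₁ + B₂ + (c + d)[1 − R_c + pcβ/((c + d)B₁) + bcβ(1 − p)/((c + d)B₂)], b₂ = (B₁ + B₂)(c + d)(1 − R_c) + B₂pcβ/B₁ + B₁bcβ(1 − p)/B₂ + B₁B₂, and b₃ = B₁B₂(c + d)(1 − R_c). -/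
set_option maxHeartbeats 1000000

open Polynomial in
theorem char_roots_nonpos_re_and_zero_simple_of_Rc_eq_one
    (lam β a b c d q1 q2 r1 r2 r3 p B1 B2 Rc b1 b2 b3 : ℝ) (F : Polynomial ℂ)
    (hlam : 0 < lam) (hβ : 0 < β) (ha : 0 < a) (hb : 0 < b) (hc : 0 < c)
    (hd : 0 < d) (hq1 : 0 < q1) (hq2 : 0 < q2) (hr1 : 0 < r1) (hr2 : 0 < r2)
    (hr3 : 0 < r3) (hp : 0 < p) (hp1 : p < 1)
    (hB1 : B1 = q1 + r1 + d) (hB2 : B2 = q2 + r2 + d)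
    (hRc : Rc = a * β / (c + d) + p * c * β / ((c + d) * B1)
      + b * β * c * (1 - p) / ((c + d) * B2))
    (hb1 : b1 = B1 + B2 + (c + d) * (1 - Rc + p * c * β / ((c + d) * B1)
      + b * c * β * (1 - p) / ((c + d) * B2)))
    (hb2 : b2 = (B1 + B2) * (c + d) * (1 - Rc) + B2 * p * c * β / B1
      + B1 * b * c * β * (1 - p) / B2 + B1 * B2)
    (hb3 : b3 = B1 * B2 * (c + d) * (1 - Rc))
    (hF : F = (X + C (d : ℂ)) ^ 2 * (X + C (r3 : ℂ) + C (d : ℂ)) *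
      (X ^ 3 + C (b1 : ℂ) * X ^ 2 + C (b2 : ℂ) * X + C (b3 : ℂ)))
    (hRc1 : Rc = 1) :
    (∀ z : ℂ, F.IsRoot z → z.re ≤ 0) ∧ rootMultiplicity 0 F = 1 := by
  have hB1pos : 0 < B1 := by rw [hB1]; linarith
  have hB2pos : 0 < B2 := by rw [hB2]; linarith
  have hcd : 0 < c + d := by linarith
  have hp' : 0 < 1 - p := by linarith
  have hb1' : b1 = B1 + B2 + p * c * β / B1 + b * c * β * (1 - p) / B2 := by
    rw [hb1, hRc1]; field_simp; ring
  have hb2' : b2 = B2 * p * c * β / B1 + B1 * b * c * β * (1 - p) / B2 + B1 * B2 := by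
    rw [hb2, hRc1]; ring
  have hb3' : b3 = 0 := by rw [hb3, hRc1]; ring
  have hb1pos : 0 < b1 := by rw [hb1']; positivity
  have hb2pos : 0 < b2 := by rw [hb2']; positivity
  -- factor F
  have hF' : F = ((X + C (d : ℂ)) ^ 2 * (X + C (r3 : ℂ) + C (d : ℂ)) *
      (X ^ 2 + C (b1 : ℂ) * X + C (b2 : ℂ))) * X := by
    rw [hF, hb3']
    simp only [Complex.ofReal_zero, map_zero]
    ring
  constructor
  · intro z hz
    rw [hF'] at hz
    have hz' : ((z + d) ^ 2 * (z + r3 + d) * (z ^ 2 + b1 * z + b2)) * z = 0 := by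
      simpa [IsRoot, eval_mul, eval_add, eval_pow, eval_X, eval_C] using hz
    rcases mul_eq_zero.1 hz' with h | h
    · rcases mul_eq_zero.1 h with h | h
      · rcases mul_eq_zero.1 h with h | h
        · have : z = -(d : ℂ) := by
            have := pow_eq_zero_iff (n := 2) (by norm_num) |>.1 h
            linear_combination this
          rw [this]; simp; linarith
        · have : z = -((r3 : ℂ) + d) := by linear_combination h
          rw [this]; simp [Complex.add_re]; linarith
      · -- quadratic case
        set x := z.re
        set y := z.im
        have him : y * (2 * x + b1) = 0 := by
          have h' := congrArg Complex.im h
          simp only [Complex.add_im, Complex.mul_im, Complex.mul_re, pow_two,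
            Complex.ofReal_im, Complex.ofReal_re, Complex.zero_im] at h'
          nlinarith [h']
        have hre : x ^ 2 - y ^ 2 + b1 * x + b2 = 0 := by
          have h' := congrArg Complex.re h
          simp only [Complex.add_re, Complex.mul_re, Complex.mul_im, pow_two,
            Complex.ofReal_im, Complex.ofReal_re, Complex.zero_re] at h'
          nlinarith [h']
        by_contra hx
        push_neg at hx
        rcases mul_eq_zero.1 him with hy | hy
        · nlinarith
        · nlinarith
    · rw [h]; simp
  · have hg0 : ¬ ((X + C (d : ℂ)) ^ 2 * (X + C (r3 : ℂ) + C (d : ℂ)) *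
        (X ^ 2 + C (b1 : ℂ) * X + C (b2 : ℂ))).IsRoot 0 := by
      simp [IsRoot]
      push_neg
      refine ⟨⟨hd.ne', ?_⟩, ?_⟩
      · intro hcon
        have : (r3 : ℂ) + d = ((r3 + d : ℝ) : ℂ) := by push_cast; ring
        rw [this] at hcon
        exact (Complex.ofReal_ne_zero.2 (by positivity : (0:ℝ) < r3 + d).ne') hcon
      · exact hb2pos.ne'
    have hgne : ((X + C (d : ℂ)) ^ 2 * (X + C (r3 : ℂ) + C (d : ℂ)) *
        (X ^ 2 + C (b1 : ℂ) * X + C (b2 : ℂ))) ≠ 0 := by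
      intro hcon
      exact hg0 (by simp [IsRoot, hcon])
    have hFne : ((X + C (d : ℂ)) ^ 2 * (X + C (r3 : ℂ) + C (d : ℂ)) *
        (X ^ 2 + C (b1 : ℂ) * X + C (b2 : ℂ))) * X ≠ 0 :=
      mul_ne_zero hgne X_ne_zero
    rw [hF', Polynomial.rootMultiplicity_mul hFne,
      Polynomial.rootMultiplicity_eq_zero hg0]
    have : rootMultiplicity (0 : ℂ) X = 1 := by
      simpa using Polynomial.rootMultiplicity_X_sub_C_self (x := (0 : ℂ))
    simp [this]
end

section
/- With B = min{B₁, B₂} and m = max{a, b, 1}, the control reproduction number satisfies R_c ≤ βm(B + c)/((c + d)B) < βm/d. -/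
theorem Rc_le_bound
    (lam β a b c d q1 q2 r1 r2 r3 p B1 B2 B m Rc : ℝ)
    (hlam : 0 < lam) (hβ : 0 < β) (ha : 0 < a) (hb : 0 < b) (hc : 0 < c)
    (hd : 0 < d) (hq1 : 0 < q1) (hq2 : 0 < q2) (hr1 : 0 < r1) (hr2 : 0 < r2)
    (hr3 : 0 < r3) (hp : 0 < p) (hp1 : p < 1)
    (hB1 : B1 = q1 + r1 + d) (hB2 : B2 = q2 + r2 + d)
    (hB : B = min B1 B2) (hm : m = max (max a b) 1)
    (hRc : Rc = a * β / (c + d) + p * c * β / ((c + d) * B1)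
      + b * β * c * (1 - p) / ((c + d) * B2)) :
    Rc ≤ β * m * (B + c) / ((c + d) * B) ∧ β * m * (B + c) / ((c + d) * B) < β * m / d := by
  have hB1pos : 0 < B1 := by rw [hB1]; linarith
  have hB2pos : 0 < B2 := by rw [hB2]; linarith
  have hdB : d < B := by
    rw [hB, lt_min_iff, hB1, hB2]; constructor <;> linarith
  have hBpos : 0 < B := lt_trans hd hdB
  have hBB1 : B ≤ B1 := by rw [hB]; exact min_le_left _ _
  have hBB2 : B ≤ B2 := by rw [hB]; exact min_le_right _ _
  have ham : a ≤ m := by rw [hm]; exact le_max_of_le_left (le_max_left _ _)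
  have hbm : b ≤ m := by rw [hm]; exact le_max_of_le_left (le_max_right _ _)
  have h1m : (1:ℝ) ≤ m := by rw [hm]; exact le_max_right _ _
  have hmpos : 0 < m := lt_of_lt_of_le one_pos h1m
  have hcd : 0 < c + d := by linarith
  have hcdB : 0 < (c + d) * B := mul_pos hcd hBpos
  have hppos : 0 ≤ p := le_of_lt hp
  have h1p : 0 ≤ 1 - p := by linarith
  constructor
  · have t1 : a * β / (c + d) ≤ m * β / (c + d) := by gcongr
    have t2 : p * c * β / ((c + d) * B1) ≤ m * (p * c * β) / ((c + d) * B) := by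
      apply div_le_div₀ (by positivity) _ hcdB (by gcongr)
      nlinarith [mul_pos (mul_pos hp hc) hβ]
    have t3 : b * β * c * (1 - p) / ((c + d) * B2) ≤ m * β * c * (1 - p) / ((c + d) * B) := by
      gcongr
    have heq : m * β / (c + d) + m * (p * c * β) / ((c + d) * B)
        + m * β * c * (1 - p) / ((c + d) * B) = β * m * (B + c) / ((c + d) * B) := by
      field_simp
      ring
    rw [hRc, ← heq]
    linarith
  · rw [div_lt_div_iff₀ hcdB hd]
    nlinarith [mul_pos (mul_pos hβ hmpos) hc]
end

section
/- Assume R_c > 1, let θ ∈ (0,1), η ∈ (θ,1), and let (S*, E*, I*, A*, Q*, R*) be the unique equilibrium with all coordinates positive. Let ε ∈ (0, S⁰(1 − η)) and set S̃(ε) = λ/(ηβ(aE* + I* + bA*)/(S⁰ − ε) + d) and k̃(ε) = S*(S⁰ + 2ε)/(S⁰ S̃(ε)); assume k̃(ε) < 1. Suppose a solution of the model and a time t₀ ≥ 0 are such that for all t ≥ t₀: E(t) ≤ θE*, I(t) < S⁰ + ε, A(t) < S⁰ + ε, S⁰ − ε < N(t) < S⁰ + ε, and S(t) > λ/(βm)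 − ε with m = max{a, b, 1}. Then for all t ≥ t₀ + T̃₁(ε) + T̃₂(ε) one has S(t)/N(t) > k̃(ε)S̃(ε)/(S⁰ + ε) > S*/S⁰, where T̃₁(ε) = max{ −(1/B₁)·ln[(η − θ)I*/(S⁰ + ε − θI*)], −(1/B₂)·ln[(η − θ)A*/(S⁰ + ε − θA*)] } and T̃₂(ε) = −(S̃(ε)/λ)·ln[(1 − k̃(ε))S̃(ε)/(S̃(ε) + ε − λ/(βm))]. -/
open Real Set

theorem image_le_of_deriv_le_linear {f f' : ℝ → ℝ} {K c t₀ : ℝ}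
    (hf : ∀ t, t₀ ≤ t → HasDerivAt f (f' t) t) (hf' : ∀ t, t₀ ≤ t → f' t ≤ K * (c - f t))
    {t : ℝ} (ht : t₀ ≤ t) : f t ≤ c + (f t₀ - c) * exp (-(K * (t - t₀))) := by
  set g : ℝ → ℝ := fun s => (f s - c) * exp (K * (s - t₀))
  have hg : ∀ s, t₀ ≤ s → HasDerivAt g ((f' s + K * (f s - c)) * exp (K * (s - t₀))) s := by
    intro s hs
    have hlin : HasDerivAt (fun u => K * (u - t₀)) K s := by
      simpa using ((hasDerivAt_id s).sub_const t₀).const_mul K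
    exact (((hf s hs).sub_const c).mul hlin.exp).congr_deriv (by ring)
  have hanti : AntitoneOn g (Ici t₀) := by
    refine antitoneOn_of_hasDerivWithinAt_nonpos (convex_Ici t₀)
      (fun s hs => (hg s hs).continuousAt.continuousWithinAt)
      (fun s hs => (hg s (interior_subset hs)).hasDerivWithinAt) fun s hs => ?_
    have := hf' s (interior_subset hs)
    exact mul_nonpos_of_nonpos_of_nonneg (by linarith) (exp_pos _).le
  have hgt : g t ≤ g t₀ := hanti self_mem_Ici ht ht
  simp only [g, sub_self, mul_zero, exp_zero, mul_one] at hgt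
  rw [exp_neg, ← div_eq_mul_inv, ← sub_le_iff_le_add', le_div_iff₀ (exp_pos _)]
  exact hgt

/-- The time after which `c + (U - c) * exp (-K t)` has come down (or up) to `L`. -/
noncomputable def relaxationTime (K c L U : ℝ) : ℝ := -(1 / K) * log ((L - c) / (U - c))

theorem relaxationTime_pos {K c L U : ℝ} (hK : 0 < K) (hcL : c < L) (hLU : L < U) :
    0 < relaxationTime K c L U :=
  mul_pos_of_neg_of_neg (by simpa using hK)
    (log_neg (div_pos (by linarith) (by linarith)) ((div_lt_one (by linarith)).2 (by linarith)))

theorem relaxationTime_neg (K c L U : ℝ) :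
    relaxationTime K (-c) (-L) (-U) = relaxationTime K c L U := by
  rw [relaxationTime, relaxationTime, neg_sub_neg, neg_sub_neg, ← neg_div_neg_eq (c - L),
    neg_sub, neg_sub]

theorem relaxationTime_pos' {K c L U : ℝ} (hK : 0 < K) (hUL : U < L) (hLc : L < c) :
    0 < relaxationTime K c L U :=
  relaxationTime_neg K c L U ▸ relaxationTime_pos hK (neg_lt_neg hLc) (neg_lt_neg hUL)

theorem mul_exp_neg_le_of_relaxationTime_le {K c L U s : ℝ} (hK : 0 < K) (hcL : c < L)
    (hLU : L < U) (hs : relaxationTime K c L U ≤ s) : (U - c) * exp (-(K * s)) ≤ L - c := by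
  have hpos : 0 < (L - c) / (U - c) := div_pos (by linarith) (by linarith)
  have hlog : -(K * s) ≤ log ((L - c) / (U - c)) := by
    have := mul_le_mul_of_nonneg_left hs hK.le
    rw [relaxationTime, ← mul_assoc, mul_neg, mul_one_div_cancel hK.ne', neg_one_mul] at this
    linarith
  calc (U - c) * exp (-(K * s)) ≤ (U - c) * ((L - c) / (U - c)) := by
        gcongr
        · linarith
        · exact (exp_le_exp.2 hlog).trans (exp_log hpos).le
    _ = L - c := mul_div_cancel₀ _ (by linarith)

theorem lt_of_deriv_le_linear {f f' : ℝ → ℝ} {K c L U t₀ : ℝ} (hK : 0 < K) (hcL : c < L)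
    (hLU : L < U) (hf : ∀ t, t₀ ≤ t → HasDerivAt f (f' t) t)
    (hf' : ∀ t, t₀ ≤ t → f' t ≤ K * (c - f t)) (h₀ : f t₀ < U) {t : ℝ}
    (ht : t₀ + relaxationTime K c L U ≤ t) : f t < L := by
  have hT := relaxationTime_pos hK hcL hLU
  have hdecay := mul_exp_neg_le_of_relaxationTime_le hK hcL hLU (le_sub_iff_add_le'.2 ht)
  have hcomp := image_le_of_deriv_le_linear hf hf' (by linarith : t₀ ≤ t)
  have := mul_lt_mul_of_pos_right (sub_lt_sub_right h₀ c) (exp_pos (-(K * (t - t₀))))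
  linarith

theorem lt_of_linear_le_deriv {f f' : ℝ → ℝ} {K c L U t₀ : ℝ} (hK : 0 < K) (hUL : U < L)
    (hLc : L < c) (hf : ∀ t, t₀ ≤ t → HasDerivAt f (f' t) t)
    (hf' : ∀ t, t₀ ≤ t → K * (c - f t) ≤ f' t) (h₀ : U < f t₀) {t : ℝ}
    (ht : t₀ + relaxationTime K c L U ≤ t) : L < f t :=
  neg_lt_neg_iff.1 <| lt_of_deriv_le_linear (f := fun s => -f s) (f' := fun s => -f' s) hK
    (neg_lt_neg hLc) (neg_lt_neg hUL) (fun s hs => (hf s hs).neg)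
    (fun s hs => by linear_combination hf' s hs) (neg_lt_neg h₀)
    (by rwa [relaxationTime_neg])

theorem compartment_lt {X E : ℝ → ℝ} {k B Xs Es θ η U t₀ : ℝ} (hk : 0 ≤ k) (hB : 0 < B)
    (hXs : 0 < Xs) (hθη : θ < η) (hηU : η * Xs < U) (hkB : k * Es = B * Xs)
    (hX : ∀ t, t₀ ≤ t → HasDerivAt X (k * E t - B * X t) t)
    (hE : ∀ t, t₀ ≤ t → E t ≤ θ * Es) (h₀ : X t₀ < U) {t : ℝ}
    (ht : t₀ + relaxationTime B (θ * Xs) (η * Xs) U ≤ t) : X t < η * Xs :=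
  lt_of_deriv_le_linear hB (by gcongr) hηU hX
    (fun s hs => by linear_combination mul_le_mul_of_nonneg_left (hE s hs) hk + θ * hkB) h₀ ht

theorem susceptible_gt {S F N : ℝ → ℝ} {lam β d Fmax Nmin St L U t₀ : ℝ} (hlam : 0 < lam)
    (hβ : 0 ≤ β) (hd : 0 < d) (hFmax : 0 ≤ Fmax) (hNmin : 0 < Nmin)
    (hS : ∀ t, t₀ ≤ t → HasDerivAt S (lam - β * S t * F t / N t - d * S t) t)
    (hS₀ : ∀ t, t₀ ≤ t → 0 ≤ S t) (hF : ∀ t, t₀ ≤ t → F t ≤ Fmax)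
    (hN : ∀ t, t₀ ≤ t → Nmin < N t) (hSt : St = lam / (β * Fmax / Nmin + d))
    (hUL : U < L) (hLSt : L < St) (h₀ : U < S t₀) {t : ℝ}
    (ht : t₀ + relaxationTime (lam / St) St L U ≤ t) : L < S t := by
  have hK : 0 < β * Fmax / Nmin + d := by positivity
  rw [hSt, div_div_cancel₀ hlam.ne', ← hSt] at ht
  refine lt_of_linear_le_deriv hK hUL hLSt hS (fun s hs => ?_) h₀ ht
  have hforce : β * S s * F s / N s ≤ β * S s * Fmax / Nmin :=
    div_le_div₀ (mul_nonneg (mul_nonneg hβ (hS₀ s hs)) hFmax)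
      (mul_le_mul_of_nonneg_left (hF s hs) (mul_nonneg hβ (hS₀ s hs))) hNmin (hN s hs).le
  rw [hSt, mul_sub, mul_div_cancel₀ _ hK.ne']
  linear_combination hforce

theorem infectionForce_le {E I A : ℝ → ℝ} {a b c p B₁ B₂ Es Is As θ η U T t₀ : ℝ}
    (ha : 0 ≤ a) (hb : 0 ≤ b) (hc : 0 ≤ c) (hp : 0 ≤ p) (hp1 : p ≤ 1) (hB₁ : 0 < B₁)
    (hB₂ : 0 < B₂) (hEs : 0 < Es) (hIs : 0 < Is) (hAs : 0 < As) (hθη : θ < η)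
    (hηI : η * Is < U) (hηA : η * As < U)
    (hIeq : p * c * Es = B₁ * Is) (hAeq : (1 - p) * c * Es = B₂ * As)
    (hI : ∀ t, t₀ ≤ t → HasDerivAt I (p * c * E t - B₁ * I t) t)
    (hA : ∀ t, t₀ ≤ t → HasDerivAt A ((1 - p) * c * E t - B₂ * A t) t)
    (hE : ∀ t, t₀ ≤ t → E t ≤ θ * Es) (hI₀ : I t₀ < U) (hA₀ : A t₀ < U)
    (hTI : relaxationTime B₁ (θ * Is) (η * Is) U ≤ T)
    (hTA : relaxationTime B₂ (θ * As) (η * As) U ≤ T) {t : ℝ} (ht : t₀ + T ≤ t) :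
    a * E t + I t + b * A t ≤ η * (a * Es + Is + b * As) := by
  have hT : 0 ≤ T := (relaxationTime_pos hB₁ (by gcongr) hηI).le.trans hTI
  have hIt := compartment_lt (mul_nonneg hp hc) hB₁ hIs hθη hηI hIeq hI hE hI₀
    (t := t) (by linarith)
  have hAt := compartment_lt (mul_nonneg (sub_nonneg.2 hp1) hc) hB₂ hAs hθη hηA hAeq hA hE hA₀
    (t := t) (by linarith)
  have hEt : E t ≤ η * Es := (hE t (by linarith)).trans (by gcongr)
  linarith [mul_le_mul_of_nonneg_left hEt ha, mul_le_mul_of_nonneg_left hAt.le hb]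

section Equilibrium

variable {lam β a b c d q1 q2 r1 r2 r3 p S E I A Q R : ℝ}

theorem IsEquilibrium.total_eq (h : IsEquilibrium lam β a b c d q1 q2 r1 r2 r3 p S E I A Q R)
    (hd : d ≠ 0) : S + E + I + A + Q + R = lam / d := by
  obtain ⟨-, h1, h2, h3, h4, h5, h6⟩ := h
  rw [eq_div_iff hd]
  linarith

theorem IsEquilibrium.S_mul_eq (h : IsEquilibrium lam β a b c d q1 q2 r1 r2 r3 p S E I A Q R) :
    S * (β * (a * E + I + b * A) / (S + E + I + A + Q + R) + d) = lam := by
  linear_combination -h.2.1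

theorem IsPositiveEquilibrium.div_le_S
    (h : IsPositiveEquilibrium lam β a b c d q1 q2 r1 r2 r3 p S E I A Q R)
    (hβ : 0 < β) (hb : 0 ≤ b) (hc : 0 ≤ c) (hd : 0 < d) (hq1 : 0 ≤ q1)
    (hq2 : 0 ≤ q2) (hr1 : 0 ≤ r1) (hr2 : 0 ≤ r2) (hp : 0 ≤ p) (hp1 : p ≤ 1) :
    lam / (β * max (max a b) 1) ≤ S := by
  have htotal := h.1.total_eq hd.ne'
  obtain ⟨⟨hN, -, hE, hI, hA, -, -⟩, hS, hE0, hI0, hA0, -, -⟩ := h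
  set m := max (max a b) 1
  have ham : a ≤ m := (le_max_left a b).trans (le_max_left _ 1)
  have hbm : b ≤ m := (le_max_right a b).trans (le_max_left _ 1)
  have h1m : 1 ≤ m := le_max_right _ 1
  have hdI : d * I ≤ p * c * E := by nlinarith [mul_nonneg (add_nonneg hq1 hr1) hI0.le]
  have hdA : d * A ≤ (1 - p) * c * E := by nlinarith [mul_nonneg (add_nonneg hq2 hr2) hA0.le]
  have hdM : d * (a * E + I + b * A) ≤ m * ((c + d) * E) := by
    have hcE : 0 ≤ c * E := mul_nonneg hc hE0.le
    nlinarith [hdI, mul_le_mul_of_nonneg_left hdA hb,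
      mul_le_mul_of_nonneg_right ham (mul_nonneg hd.le hE0.le),
      mul_le_mul_of_nonneg_right hbm (mul_nonneg (sub_nonneg.2 hp1) hcE),
      mul_le_mul_of_nonneg_right h1m (mul_nonneg hp hcE)]
  have hforce : β * S * (a * E + I + b * A) = (c + d) * E * (S + E + I + A + Q + R) := by
    field_simp at hE
    linear_combination hE
  have hdN : d * (S + E + I + A + Q + R) = lam := by rw [htotal, mul_div_cancel₀ lam hd.ne']
  rw [div_le_iff₀ (by positivity)]
  refine le_of_mul_le_mul_right ?_ (by positivity : 0 < (c + d) * E)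
  calc lam * ((c + d) * E) = β * S * (d * (a * E + I + b * A)) := by
        linear_combination (-d) * hforce - (c + d) * E * hdN
    _ ≤ β * S * (m * ((c + d) * E)) := by gcongr
    _ = S * (β * m) * ((c + d) * E) := by ring

theorem IsPositiveEquilibrium.S_lt_div
    (h : IsPositiveEquilibrium lam β a b c d q1 q2 r1 r2 r3 p S E I A Q R)
    (hβ : 0 < β) (ha : 0 ≤ a) (hb : 0 ≤ b) (hd : 0 < d) {η ε : ℝ} (hη : 0 ≤ η)
    (hε : η * (lam / d) < lam / d - ε) :
    S < lam / (η * β * (a * E + I + b * A) / (lam / d - ε) + d) := by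
  have htotal := h.1.total_eq hd.ne'
  obtain ⟨hEq, hS, hE, hI, hA, -, -⟩ := h
  have hN : 0 < lam / d := htotal ▸ hEq.1
  have hNε : 0 < lam / d - ε := by nlinarith
  have hM : 0 < a * E + I + b * A := by positivity
  rw [lt_div_iff₀ (by positivity)]
  calc S * (η * β * (a * E + I + b * A) / (lam / d - ε) + d)
      < S * (β * (a * E + I + b * A) / (lam / d) + d) := by
        gcongr S * (?_ + d)
        rw [div_lt_div_iff₀ hNε hN]
        nlinarith [mul_pos hβ hM]
    _ = lam := htotal ▸ hEq.S_mul_eq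

end Equilibrium

theorem S_over_N_eventual_lower_bound_general
    (lam β a b c d q1 q2 r1 r2 r3 p B1 B2 m S0 : ℝ)
    (Sstar Estar Istar Astar Qstar Rstar θ η ε St kt T1 T2 t0 : ℝ)
    (S E I A Q R N : ℝ → ℝ)
    (hlam : 0 < lam) (hβ : 0 < β) (ha : 0 < a) (hb : 0 < b) (hc : 0 < c)
    (hd : 0 < d) (hq1 : 0 < q1) (hq2 : 0 < q2) (hr1 : 0 < r1) (hr2 : 0 < r2)
    (hp : 0 < p) (hp1 : p < 1)
    (hB1 : B1 = q1 + r1 + d) (hB2 : B2 = q2 + r2 + d)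
    (hm : m = max (max a b) 1)
    (hS0 : S0 = lam / d)
    (hθ0 : 0 < θ) (hθη : θ < η)
    (hstar : IsPositiveEquilibrium lam β a b c d q1 q2 r1 r2 r3 p
      Sstar Estar Istar Astar Qstar Rstar)
    (hε0 : 0 < ε) (hε1 : ε < S0 * (1 - η))
    (hSt : St = lam / (η * β * (a * Estar + Istar + b * Astar) / (S0 - ε) + d))
    (hkt : kt = Sstar * (S0 + 2 * ε) / (S0 * St))
    (hkt1 : kt < 1)
    (hT1 : T1 = max (-(1 / B1) * Real.log ((η - θ) * Istar / (S0 + ε - θ * Istar)))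
      (-(1 / B2) * Real.log ((η - θ) * Astar / (S0 + ε - θ * Astar))))
    (hT2 : T2 = -(St / lam) * Real.log ((1 - kt) * St / (St + ε - lam / (β * m))))
    (hS' : ∀ t, 0 ≤ t →
      HasDerivAt S (lam - β * S t * (a * E t + I t + b * A t) / N t - d * S t) t)
    (hI' : ∀ t, 0 ≤ t → HasDerivAt I (p * c * E t - B1 * I t) t)
    (hA' : ∀ t, 0 ≤ t → HasDerivAt A ((1 - p) * c * E t - B2 * A t) t)
    (hnonneg : ∀ t, 0 ≤ t →
      0 ≤ S t ∧ 0 ≤ E t ∧ 0 ≤ I t ∧ 0 ≤ A t ∧ 0 ≤ Q t ∧ 0 ≤ R t)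
    (ht0 : 0 ≤ t0)
    (hEb : ∀ t, t0 ≤ t → E t ≤ θ * Estar)
    (hIb : ∀ t, t0 ≤ t → I t < S0 + ε)
    (hAb : ∀ t, t0 ≤ t → A t < S0 + ε)
    (hNlow : ∀ t, t0 ≤ t → S0 - ε < N t)
    (hNhigh : ∀ t, t0 ≤ t → N t < S0 + ε)
    (hSlow : ∀ t, t0 ≤ t → lam / (β * m) - ε < S t)
    :
    ∀ t, t0 + T1 + T2 ≤ t →
      Sstar / S0 < kt * St / (S0 + ε) ∧ kt * St / (S0 + ε) < S t / N t := by
  have hS0pos : 0 < S0 := hS0 ▸ div_pos hlam hd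
  have hη : 0 < η := hθ0.trans hθη
  have hηε : η * S0 < S0 - ε := by linarith
  have hS0ε : 0 < S0 - ε := (mul_pos hη hS0pos).trans hηε
  have hSstar_St : Sstar < St := by
    rw [hSt]; subst hS0; exact hstar.S_lt_div hβ ha.le hb.le hd hη.le hηε
  have hSstar_ge : lam / (β * m) ≤ Sstar :=
    hm ▸ hstar.div_le_S hβ hb.le hc.le hd hq1.le hq2.le hr1.le hr2.le hp.le hp1.le
  obtain ⟨hEq, hSs, hEs, hIs, hAs, hQs, hRs⟩ := hstar
  have htotal : Sstar + Estar + Istar + Astar + Qstar + Rstar = S0 := hS0 ▸ hEq.total_eq hd.ne'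
  have hB1pos : 0 < B1 := by rw [hB1]; positivity
  have hB2pos : 0 < B2 := by rw [hB2]; positivity
  have hηI : η * Istar < S0 + ε := by nlinarith
  have hηA : η * Astar < S0 + ε := by nlinarith
  have hT1I : relaxationTime B1 (θ * Istar) (η * Istar) (S0 + ε) ≤ T1 := by
    rw [hT1, relaxationTime, ← sub_mul]; exact le_max_left _ _
  have hT1A : relaxationTime B2 (θ * Astar) (η * Astar) (S0 + ε) ≤ T1 := by
    rw [hT1, relaxationTime, ← sub_mul]; exact le_max_right _ _
  have hT1pos : 0 ≤ T1 := (relaxationTime_pos hB1pos (by gcongr) hηI).le.trans hT1I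
  have hF : ∀ s, t0 + T1 ≤ s → a * E s + I s + b * A s ≤ η * (a * Estar + Istar + b * Astar) :=
    fun s => infectionForce_le ha.le hb.le hc.le hp.le hp1.le hB1pos hB2pos hEs hIs hAs hθη hηI hηA
      (by rw [hB1]; linear_combination hEq.2.2.2.1) (by rw [hB2]; linear_combination hEq.2.2.2.2.1)
      (fun s hs => hI' s (ht0.trans hs)) (fun s hs => hA' s (ht0.trans hs)) hEb (hIb t0 le_rfl)
      (hAb t0 le_rfl) hT1I hT1A
  have hStpos : 0 < St := hSs.trans hSstar_St
  have hktSt : kt * St = Sstar * (S0 + 2 * ε) / S0 := by rw [hkt]; field_simp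
  have hSstar_kt : Sstar < kt * St := by
    rw [hktSt, lt_div_iff₀ hS0pos]; linarith [mul_pos hSs hε0]
  have hkt_St : kt * St < St := mul_lt_of_lt_one_left hStpos hkt1
  have hkt_gt : lam / (β * m) - ε < kt * St := by linarith
  have hT2' : T2 = relaxationTime (lam / St) St (kt * St) (lam / (β * m) - ε) := by
    rw [hT2, relaxationTime, one_div_div, ← neg_div_neg_eq (kt * St - St)]; ring_nf
  have hT2pos : 0 ≤ T2 := hT2' ▸ (relaxationTime_pos' (div_pos hlam hStpos) hkt_gt hkt_St).le
  intro t ht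
  have hkt_S : kt * St < S t := susceptible_gt hlam hβ.le hd (by positivity) hS0ε
    (fun s hs => hS' s (by linarith)) (fun s hs => (hnonneg s (by linarith)).1) hF
    (fun s hs => hNlow s (by linarith)) (by rw [hSt]; ring_nf) hkt_gt hkt_St
    (hSlow _ (by linarith)) (by linarith)
  constructor
  · rw [hktSt, div_div, div_lt_div_iff₀ hS0pos (by positivity)]
    linarith [mul_pos (mul_pos hSs hS0pos) hε0]
  · exact div_lt_div₀ hkt_S (hNhigh t (by linarith)).le (hnonneg t (by linarith)).1
      (hS0ε.trans (hNlow t (by linarith)))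

theorem S_over_N_eventual_lower_bound
    (lam β a b c d q1 q2 r1 r2 r3 p B1 B2 m Rc S0 : ℝ)
    (Sstar Estar Istar Astar Qstar Rstar θ η ε St kt T1 T2 t0 : ℝ)
    (S E I A Q R N : ℝ → ℝ)
    (hlam : 0 < lam) (hβ : 0 < β) (ha : 0 < a) (hb : 0 < b) (hc : 0 < c)
    (hd : 0 < d) (hq1 : 0 < q1) (hq2 : 0 < q2) (hr1 : 0 < r1) (hr2 : 0 < r2)
    (hr3 : 0 < r3) (hp : 0 < p) (hp1 : p < 1)
    (hB1 : B1 = q1 + r1 + d) (hB2 : B2 = q2 + r2 + d)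
    (hm : m = max (max a b) 1)
    (hRc : Rc = a * β / (c + d) + p * c * β / ((c + d) * B1)
      + b * β * c * (1 - p) / ((c + d) * B2))
    (hS0 : S0 = lam / d)
    (hRc1 : 1 < Rc)
    (hθ0 : 0 < θ) (hθ1 : θ < 1) (hθη : θ < η) (hη1 : η < 1)
    (hstar : IsPositiveEquilibrium lam β a b c d q1 q2 r1 r2 r3 p
      Sstar Estar Istar Astar Qstar Rstar)
    (hε0 : 0 < ε) (hε1 : ε < S0 * (1 - η))
    (hSt : St = lam / (η * β * (a * Estar + Istar + b * Astar) / (S0 - ε) + d))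
    (hkt : kt = Sstar * (S0 + 2 * ε) / (S0 * St))
    (hkt1 : kt < 1)
    (hT1 : T1 = max (-(1 / B1) * Real.log ((η - θ) * Istar / (S0 + ε - θ * Istar)))
      (-(1 / B2) * Real.log ((η - θ) * Astar / (S0 + ε - θ * Astar))))
    (hT2 : T2 = -(St / lam) * Real.log ((1 - kt) * St / (St + ε - lam / (β * m))))
    (hN : ∀ t, N t = S t + E t + I t + A t + Q t + R t)
    (hS' : ∀ t, 0 ≤ t →
      HasDerivAt S (lam - β * S t * (a * E t + I t + b * A t) / N t - d * S t) t)
    (hE' : ∀ t, 0 ≤ t →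
      HasDerivAt E (β * S t * (a * E t + I t + b * A t) / N t - (c + d) * E t) t)
    (hI' : ∀ t, 0 ≤ t → HasDerivAt I (p * c * E t - B1 * I t) t)
    (hA' : ∀ t, 0 ≤ t → HasDerivAt A ((1 - p) * c * E t - B2 * A t) t)
    (hQ' : ∀ t, 0 ≤ t → HasDerivAt Q (q1 * I t + q2 * A t - (r3 + d) * Q t) t)
    (hR' : ∀ t, 0 ≤ t → HasDerivAt R (r1 * I t + r2 * A t + r3 * Q t - d * R t) t)
    (hnonneg : ∀ t, 0 ≤ t →
      0 ≤ S t ∧ 0 ≤ E t ∧ 0 ≤ I t ∧ 0 ≤ A t ∧ 0 ≤ Q t ∧ 0 ≤ R t)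
    (hE0 : 0 < E 0)
    (hNpos : ∀ t, 0 ≤ t → 0 < N t)
    (ht0 : 0 ≤ t0)
    (hEb : ∀ t, t0 ≤ t → E t ≤ θ * Estar)
    (hIb : ∀ t, t0 ≤ t → I t < S0 + ε)
    (hAb : ∀ t, t0 ≤ t → A t < S0 + ε)
    (hNlow : ∀ t, t0 ≤ t → S0 - ε < N t)
    (hNhigh : ∀ t, t0 ≤ t → N t < S0 + ε)
    (hSlow : ∀ t, t0 ≤ t → lam / (β * m) - ε < S t)
    :
    ∀ t, t0 + T1 + T2 ≤ t →
      Sstar / S0 < kt * St / (S0 + ε) ∧ kt * St / (S0 + ε) < S t / N t :=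
  S_over_N_eventual_lower_bound_general lam β a b c d q1 q2 r1 r2 r3 p B1 B2 m S0 Sstar Estar Istar
    Astar Qstar Rstar θ η ε St kt T1 T2 t0 S E I A Q R N hlam hβ ha hb hc hd hq1 hq2 hr1 hr2 hp hp1
    hB1 hB2 hm hS0 hθ0 hθη hstar hε0 hε1 hSt hkt hkt1 hT1 hT2 hS' hI' hA' hnonneg ht0 hEb hIb hAb
    hNlow hNhigh hSlow
end
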